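/- Let n ≥ 2 be an integer, k ≥ 1 an integer, 0 < γ ≤ 1, and ε > 0. If V ∈ C²((0,1)) ∩ C((0,1]) satisfies L_k V = 0 on (0,1) and V(r) → 0 as r → 0+, then |V(r)| ≤ r |V(1)| for all r ∈ (0,1]. -/

import Mathlib

open Set Filter

noncomputable section

/-- The ODE operator `L_k`:
`(L_k h)(r) = h'' + ((n-2)/r + 2r/(ε+r²)) h' - (k(k+n-3)/r² + 2/(γ(ε+r²))) h`. -/
def Lk (n k : ℕ) (γ ε : ℝ) (h : ℝ → ℝ) (r : ℝ) : ℝ :=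
  deriv (deriv h) r + (((n:ℝ) - 2)/r + 2*r/(ε + r^2)) * deriv h r
    - ((k:ℝ)*((k:ℝ) + (n:ℝ) - 3)/r^2 + 2/(γ*(ε + r^2))) * h r

/-- `α_k := (-(n-1) + √((n-1)² + 4(k(k+n-3) + 2/γ)))/2`. -/
def alphaK (n k : ℕ) (γ : ℝ) : ℝ :=
  (-((n:ℝ) - 1) + Real.sqrt (((n:ℝ)-1)^2 + 4*((k:ℝ)*((k:ℝ)+(n:ℝ)-3) + 2/γ)))/2

/-!
The line `r ↦ C r` with `C = |V 1|` is a supersolution: `L_k (C r) = C (A - B r) ≤ 0`, where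
`A = (n-2)/r + 2r/(ε+r²)` and `B = k(k+n-3)/r² + 2/(γ(ε+r²))`; indeed `A ≤ B r` because
`k(k+n-3) ≥ n-2` for `k ≥ 1` and `γ ≤ 1`. Since `B > 0`, the function `W = C r - V` cannot have
a negative interior minimum, for there `W' = 0`, `W'' ≥ 0` and hence
`L_k W > 0 = L_k (C r) - L_k V`. As `W → 0` at `0⁺` and `W 1 ≥ 0`, this gives `V ≤ C r`;
the same applied to `-V` gives the bound.
-/

open Topology

/-- If `f'' a < 0`, the second derivative test makes `a` a local maximum too, so `f` is locally
constant and `f'' a = 0`. -/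
lemma IsLocalMin.deriv_deriv_nonneg {f : ℝ → ℝ} {a : ℝ} (hmin : IsLocalMin f a)
    (hc : ContinuousAt f a) : 0 ≤ deriv (deriv f) a := by
  by_contra! hneg
  have hmax : IsLocalMax f a := isLocalMax_of_deriv_deriv_neg hneg hmin.deriv_eq_zero hc
  have hconst : f =ᶠ[𝓝 a] fun _ => f a :=
    (hmin.and hmax).mono fun _ hx => le_antisymm hx.2 hx.1
  have hderiv : deriv f =ᶠ[𝓝 a] fun _ => 0 :=
    hconst.eventuallyEq_nhds.mono fun _ hx => by rw [hx.deriv_eq, deriv_const]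
  rw [hderiv.deriv_eq, deriv_const] at hneg
  exact lt_irrefl 0 hneg

lemma exists_isMinOn_Ioc_of_tendsto {f : ℝ → ℝ} {a b L x : ℝ} (hf : ContinuousOn f (Ioc a b))
    (hlim : Tendsto f (𝓝[>] a) (𝓝 L)) (hx : x ∈ Ioc a b) (hfx : f x < L) :
    ∃ c ∈ Ioc a b, IsMinOn f (Ioc a b) c := by
  obtain ⟨u, hau, hu⟩ := mem_nhdsGT_iff_exists_Ioo_subset.mp (hlim.eventually (lt_mem_nhds hfx))
  set d := min u x
  have hd : a < d := lt_min hau hx.1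
  have hsub : Icc d b ⊆ Ioc a b := fun y hy => ⟨hd.trans_le hy.1, hy.2⟩
  obtain ⟨c, hc, hmin⟩ := isCompact_Icc.exists_isMinOn
    ⟨x, min_le_right u x, hx.2⟩ (hf.mono hsub)
  refine ⟨c, hsub hc, fun y hy => ?_⟩
  rcases le_or_gt d y with hdy | hyd
  · exact hmin ⟨hdy, hy.2⟩
  · have hfy : f x < f y := hu ⟨hy.1, hyd.trans_le (min_le_left u x)⟩
    exact (hmin ⟨min_le_right u x, hx.2⟩).trans hfy.le

section Lk

variable {n k : ℕ} {γ ε : ℝ}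

lemma Lk_neg (f : ℝ → ℝ) (r : ℝ) : Lk n k γ ε (-f) r = -Lk n k γ ε f r := by
  have hneg : deriv (-f) = -deriv f := deriv.neg'
  simp only [Lk, hneg, deriv.neg, Pi.neg_apply]
  ring

lemma Lk_sub {f g : ℝ → ℝ} {r : ℝ} (hf : ContDiffAt ℝ 2 f r) (hg : ContDiffAt ℝ 2 g r) :
    Lk n k γ ε (f - g) r = Lk n k γ ε f r - Lk n k γ ε g r := by
  have hderiv : deriv (f - g) =ᶠ[𝓝 r] deriv f - deriv g := by
    filter_upwards [hf.eventually (by simp), hg.eventually (by simp)] with y hfy hgy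
    exact deriv_sub (hfy.differentiableAt two_ne_zero) (hgy.differentiableAt two_ne_zero)
  have hderiv2 : deriv (deriv (f - g)) r = deriv (deriv f) r - deriv (deriv g) r := by
    rw [hderiv.deriv_eq]
    exact deriv_sub ((hf.derivWithin (m := 1) (by norm_num)).differentiableAt one_ne_zero)
      ((hg.derivWithin (m := 1) (by norm_num)).differentiableAt one_ne_zero)
  simp only [Lk, hderiv2, hderiv.eq_of_nhds, Pi.sub_apply]
  ring

lemma Lk_const_mul_id_nonpos (hn : 2 ≤ n) (hk : 1 ≤ k) (hγ0 : 0 < γ) (hγ1 : γ ≤ 1) (hε : 0 < ε)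
    {C r : ℝ} (hC : 0 ≤ C) (hr : 0 < r) : Lk n k γ ε (fun x => C * x) r ≤ 0 := by
  have hn' : (2 : ℝ) ≤ n := by exact_mod_cast hn
  have hk' : (1 : ℝ) ≤ k := by exact_mod_cast hk
  have hE : 0 < ε + r ^ 2 := by positivity
  have hfirst : ((n : ℝ) - 2) / r ≤ (k : ℝ) * (k + n - 3) / r ^ 2 * r := by
    rw [div_mul_eq_mul_div, pow_two, mul_div_mul_right _ _ hr.ne']
    gcongr
    nlinarith
  have hsecond : 2 * r / (ε + r ^ 2) ≤ 2 / (γ * (ε + r ^ 2)) * r := by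
    rw [div_mul_eq_mul_div, mul_comm 2 r]
    gcongr
    nlinarith
  have hderiv : deriv (fun x => C * x) = fun _ => C := by
    funext x
    simp
  simp only [Lk, hderiv, deriv_const]
  nlinarith

lemma Lk_pos_of_isLocalMin (hn : 2 ≤ n) (hγ0 : 0 < γ) (hε : 0 < ε) {W : ℝ → ℝ} {r : ℝ}
    (hr : 0 < r) (hmin : IsLocalMin W r) (hc : ContinuousAt W r) (hneg : W r < 0) :
    0 < Lk n k γ ε W r := by
  have hK : (0 : ℝ) ≤ (k : ℝ) * (k + n - 3) := by
    rcases k with _ | k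
    · simp
    · have hn' : (2 : ℝ) ≤ n := by exact_mod_cast hn
      push_cast
      nlinarith
  have hB : 0 < (k : ℝ) * (k + n - 3) / r ^ 2 + 2 / (γ * (ε + r ^ 2)) := by positivity
  have h2 := hmin.deriv_deriv_nonneg hc
  simp only [Lk, hmin.deriv_eq_zero, mul_zero, add_zero]
  nlinarith

lemma le_mul_abs_of_Lk_eq_zero (hn : 2 ≤ n) (hk : 1 ≤ k) (hγ0 : 0 < γ) (hγ1 : γ ≤ 1)
    (hε : 0 < ε) {V : ℝ → ℝ} (hV2 : ∀ r ∈ Ioo (0 : ℝ) 1, ContDiffAt ℝ 2 V r)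
    (hVc : ContinuousOn V (Ioc 0 1)) (hODE : ∀ r ∈ Ioo (0 : ℝ) 1, Lk n k γ ε V r = 0)
    (hV0 : Tendsto V (𝓝[>] 0) (𝓝 0)) {r : ℝ} (hr : r ∈ Ioc (0 : ℝ) 1) :
    V r ≤ r * |V 1| := by
  by_contra! hlt
  set C := |V 1|
  have hline : ContDiff ℝ 2 fun x : ℝ => C * x := contDiff_const.mul contDiff_id
  set W := (fun x : ℝ => C * x) - V with hW
  have hWc : ContinuousOn W (Ioc 0 1) := hline.continuous.continuousOn.sub hVc
  have hW0 : Tendsto W (𝓝[>] 0) (𝓝 0) := by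
    have h := ((hline.continuous.tendsto' 0 0 (mul_zero C)).mono_left nhdsWithin_le_nhds).sub hV0
    rwa [sub_zero] at h
  have hWr : W r < 0 := by
    simp only [hW, Pi.sub_apply]
    linarith
  obtain ⟨r₀, hr₀, hmin⟩ := exists_isMinOn_Ioc_of_tendsto hWc hW0 hr hWr
  have hneg : W r₀ < 0 := (hmin hr).trans_lt hWr
  have hr₀1 : r₀ < 1 := by
    refine hr₀.2.lt_of_ne fun h => ?_
    simp only [hW, h, Pi.sub_apply, mul_one] at hneg
    linarith [le_abs_self (V 1)]
  have hr₀' : r₀ ∈ Ioo (0 : ℝ) 1 := ⟨hr₀.1, hr₀1⟩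
  have hpos : 0 < Lk n k γ ε W r₀ :=
    Lk_pos_of_isLocalMin hn hγ0 hε hr₀.1 (hmin.isLocalMin (Ioc_mem_nhds hr₀.1 hr₀1))
      (hline.continuous.continuousAt.sub (hV2 r₀ hr₀').continuousAt) hneg
  rw [hW, Lk_sub hline.contDiffAt (hV2 r₀ hr₀'), hODE r₀ hr₀', sub_zero] at hpos
  exact (Lk_const_mul_id_nonpos hn hk hγ0 hγ1 hε (abs_nonneg _) hr₀.1).not_gt hpos

end Lk

/-- Decay estimate for spherical-harmonic modes, case `0 < γ ≤ 1`. -/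
theorem mode_decay_small_gamma (n k : ℕ) (hn : 2 ≤ n) (hk : 1 ≤ k) (γ ε : ℝ)
    (hγ0 : 0 < γ) (hγ1 : γ ≤ 1) (hε : 0 < ε) (V : ℝ → ℝ)
    (hV2 : ∀ r ∈ Ioo (0:ℝ) 1, ContDiffAt ℝ 2 V r)
    (hVc : ContinuousOn V (Ioc (0:ℝ) 1))
    (hODE : ∀ r ∈ Ioo (0:ℝ) 1, Lk n k γ ε V r = 0)
    (hV0 : Tendsto V (nhdsWithin 0 (Ioi 0)) (nhds 0)) :
    ∀ r ∈ Ioc (0:ℝ) 1, |V r| ≤ r * |V 1| := by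
  intro r hr
  have hupper := le_mul_abs_of_Lk_eq_zero hn hk hγ0 hγ1 hε hV2 hVc hODE hV0 hr
  have hlower := le_mul_abs_of_Lk_eq_zero hn hk hγ0 hγ1 hε (V := -V)
    (fun x hx => (hV2 x hx).neg) hVc.neg
    (fun x hx => by rw [Lk_neg, hODE x hx, neg_zero]) (by have h := hV0.neg; rwa [neg_zero] at h) hr
  rw [Pi.neg_apply, Pi.neg_apply, abs_neg] at hlower
  exact abs_le.mpr ⟨by linarith, hupper⟩
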